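/- If wIFS¹ is G_{δσ}-hard in K([0,1]), then for every d ≥ 1 the set wIFS^d is G_{δσ}-hard in K([0,1]^d). More precisely: the map K([0,1]) → K([0,1]^d), A ↦ A × {0}^{d−1}, is continuous, and A ∈ wIFS¹ if and only if A × {0}^{d−1} ∈ wIFS^d. -/
import Mathlib


open TopologicalSpace

/-- A weak contraction: `d(f(x),f(y)) < d(x,y)` for all distinct `x, y`. -/
def IsWeakContraction {X : Type*} [MetricSpace X] (f : X → X) : Prop :=
  ∀ x y, x ≠ y → dist (f x) (f y) < dist x y

/-- The family of attractors of finite systems of weak contractions on `X`,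
as a subset of the hyperspace `K(X)`. -/
def wIFS (X : Type*) [MetricSpace X] : Set (NonemptyCompacts X) :=
  {A | ∃ (k : ℕ) (s : Fin (k + 1) → X → X),
      (∀ i, IsWeakContraction (s i)) ∧ (A : Set X) = ⋃ i, s i '' (A : Set X)}

/-- A set `S` in a topological space is `G_{δσ}`-hard if every `G_{δσ}` subset of
every Polish space is the preimage of `S` under some continuous map. -/
def GdeltaSigmaHard {X : Type*} [TopologicalSpace X] (S : Set X) : Prop :=
  ∀ (Y : Type) (_ : TopologicalSpace Y) (_ : PolishSpace Y) (B : Set Y),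
    (∃ G : ℕ → ℕ → Set Y, (∀ i j, IsOpen (G i j)) ∧ B = ⋃ i, ⋂ j, G i j) →
    ∃ g : Y → X, Continuous g ∧ g ⁻¹' S = B

/-- The unit interval `[0,1]` as a metric space. -/
abbrev I01 := Set.Icc (0 : ℝ) 1

/-- The cube `[0,1]^d`. -/
abbrev Cube (d : ℕ) := Fin d → I01

/-- The embedding `[0,1] → [0,1]^d`, `x ↦ (x, 0, …, 0)`. -/
noncomputable def emb (d : ℕ) (x : I01) : Cube d :=
  fun j => if (j : ℕ) = 0 then x else ⟨0, by norm_num⟩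

lemma emb_continuous (d : ℕ) : Continuous (emb d) := by
  apply continuous_pi
  intro j
  unfold emb
  by_cases h : (j : ℕ) = 0 <;> simp [h]
  · exact continuous_id
  · exact continuous_const

/-- The induced map `K([0,1]) → K([0,1]^d)`, `A ↦ A × {0}^{d-1}`. -/
noncomputable def PhiMap (d : ℕ) (A : NonemptyCompacts I01) :
    NonemptyCompacts (Cube d) :=
  ⟨⟨emb d '' (A : Set I01), A.isCompact.image (emb_continuous d)⟩,
    A.nonempty.image (emb d)⟩

/-- If `wIFS¹` is `G_{δσ}`-hard in `K([0,1])`, then for every `d ≥ 1` the set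
`wIFS^d` is `G_{δσ}`-hard in `K([0,1]^d)`. More precisely: the map
`A ↦ A × {0}^{d-1}` is continuous, and `A ∈ wIFS¹ ↔ A × {0}^{d-1} ∈ wIFS^d`. -/
lemma emb_apply_zero (d : ℕ) (hd : 1 ≤ d) (x : I01) : emb d x ⟨0, hd⟩ = x := by
  simp [emb]

lemma emb_isometry (d : ℕ) (hd : 1 ≤ d) : Isometry (emb d) := by
  apply Isometry.of_dist_eq
  intro x y
  apply le_antisymm
  · rw [dist_pi_le_iff dist_nonneg]
    intro j
    by_cases h : (j : ℕ) = 0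
    · simp [emb, h]
    · simp [emb, h]
  · have := dist_le_pi_dist (emb d x) (emb d y) ⟨0, hd⟩
    rwa [emb_apply_zero d hd, emb_apply_zero d hd] at this

lemma emb_injective (d : ℕ) (hd : 1 ≤ d) : Function.Injective (emb d) := by
  intro x y h
  have := congrFun h ⟨0, hd⟩
  rwa [emb_apply_zero d hd, emb_apply_zero d hd] at this

lemma phi_isometry (d : ℕ) (hd : 1 ≤ d) : Isometry (PhiMap d) := by
  apply Isometry.of_dist_eq
  intro A B
  rw [Metric.NonemptyCompacts.dist_eq, Metric.NonemptyCompacts.dist_eq]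
  exact Metric.hausdorffDist_image (emb_isometry d hd)

lemma wIFS_iff (d : ℕ) (hd : 1 ≤ d) (A : NonemptyCompacts I01) :
    A ∈ wIFS I01 ↔ PhiMap d A ∈ wIFS (Cube d) := by
  constructor
  · rintro ⟨k, s, hs, hA⟩
    refine ⟨k, fun i x => emb d (s i (x ⟨0, hd⟩)), ?_, ?_⟩
    · intro i x y hxy
      dsimp only
      by_cases h : x ⟨0, hd⟩ = y ⟨0, hd⟩
      · rw [h]
        simpa using dist_pos.2 hxy
      · calc dist (emb d (s i (x ⟨0, hd⟩))) (emb d (s i (y ⟨0, hd⟩)))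
            = dist (s i (x ⟨0, hd⟩)) (s i (y ⟨0, hd⟩)) := (emb_isometry d hd).dist_eq _ _
          _ < dist (x ⟨0, hd⟩) (y ⟨0, hd⟩) := hs i _ _ h
          _ ≤ dist x y := dist_le_pi_dist x y _
    · show emb d '' (A : Set I01) = ⋃ i, (fun x => emb d (s i (x ⟨0, hd⟩))) '' (emb d '' (A : Set I01))
      conv_lhs => rw [hA]
      rw [Set.image_iUnion]
      refine Set.iUnion_congr fun i => ?_
      rw [Set.image_image, Set.image_image]
      exact Set.image_congr fun a _ => by rw [emb_apply_zero d hd]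
  · rintro ⟨k, t, ht, hT⟩
    have hT' : emb d '' (A : Set I01) = ⋃ i, t i '' (emb d '' (A : Set I01)) := hT
    have hTsub : ∀ i, t i '' (emb d '' (A : Set I01)) ⊆ emb d '' (A : Set I01) := by
      intro i
      conv_rhs => rw [hT']
      exact Set.subset_iUnion (fun i => t i '' (emb d '' (A : Set I01))) i
    refine ⟨k, fun i x => (t i (emb d x)) ⟨0, hd⟩, ?_, ?_⟩
    · intro i x y hxy
      dsimp only
      calc dist ((t i (emb d x)) ⟨0, hd⟩) ((t i (emb d y)) ⟨0, hd⟩)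
          ≤ dist (t i (emb d x)) (t i (emb d y)) := dist_le_pi_dist _ _ _
        _ < dist (emb d x) (emb d y) := ht i _ _ fun h => hxy (emb_injective d hd h)
        _ = dist x y := (emb_isometry d hd).dist_eq _ _
    · have key : ∀ i, ∀ a ∈ (A : Set I01), emb d ((t i (emb d a)) ⟨0, hd⟩) = t i (emb d a) := by
        intro i a ha
        obtain ⟨b, hb, hba⟩ := hTsub i ⟨emb d a, Set.mem_image_of_mem _ ha, rfl⟩
        rw [← hba, emb_apply_zero d hd]
      apply (emb_injective d hd).image_injective
      show emb d '' (A : Set I01) = emb d '' ⋃ i, (fun x => (t i (emb d x)) ⟨0, hd⟩) '' (A : Set I01)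
      rw [Set.image_iUnion, hT']
      refine Set.iUnion_congr fun i => ?_
      calc t i '' (emb d '' (A : Set I01))
          = (fun a => t i (emb d a)) '' (A : Set I01) := Set.image_image _ _ _
        _ = (fun a => emb d ((t i (emb d a)) ⟨0, hd⟩)) '' (A : Set I01) :=
            Set.image_congr fun a ha => (key i a ha).symm
        _ = emb d '' ((fun x => (t i (emb d x)) ⟨0, hd⟩) '' (A : Set I01)) :=
            (Set.image_image _ _ _).symm

theorem stmt18 (d : ℕ) (hd : 1 ≤ d) (h1 : GdeltaSigmaHard (wIFS I01)) :
    GdeltaSigmaHard (wIFS (Cube d)) ∧ Continuous (PhiMap d) ∧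
      ∀ A : NonemptyCompacts I01, A ∈ wIFS I01 ↔ PhiMap d A ∈ wIFS (Cube d) := by
  refine ⟨?_, (phi_isometry d hd).continuous, wIFS_iff d hd⟩
  intro Y _ _ B hB
  obtain ⟨g, hg, hgB⟩ := h1 Y ‹_› ‹_› B hB
  refine ⟨PhiMap d ∘ g, (phi_isometry d hd).continuous.comp hg, ?_⟩
  rw [Set.preimage_comp]
  rw [show PhiMap d ⁻¹' wIFS (Cube d) = wIFS I01 from
    Set.ext fun A => (wIFS_iff d hd A).symm, hgB]
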